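/- Under the hole-punching graph-cluster randomization design with 0 < p_t < 1 and 0 < p_hp < 1, for each t ∈ {0,1} the variance of the Horvitz–Thompson estimator satisfies Var[μ̂(t)] = (1/N²)·[ (p(t,t)/p(t)² − 1)·Σ_{c∈𝒞} S_c(t,t) + ((p(t) − p(t,t))/p(t)²)·Q(t,t) ]. -/

import Mathlib

open MeasureTheory ProbabilityTheory

/-- The Bernoulli measure on `Bool` with success probability `p`. -/
noncomputable def bernoulliMeasureB (p : ℝ) : Measure Bool :=
  ENNReal.ofReal p • Measure.dirac true + ENNReal.ofReal (1 - p) • Measure.dirac false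

instance bernoulliMeasureB.instIsFiniteMeasure (p : ℝ) :
    IsFiniteMeasure (bernoulliMeasureB p) where
  measure_univ_lt_top := by
    simp [bernoulliMeasureB]

/-- The hole-punching graph-cluster randomization design measure on the product space
`(C → Bool) × (Fin N → Bool)`: i.i.d. Bernoulli(`pt`) cluster-level assignments and
i.i.d. Bernoulli(`php`) unit-level flips, all mutually independent. -/
noncomputable def designMeasure (C : Type*) [Fintype C] (N : ℕ) (pt php : ℝ) :
    Measure ((C → Bool) × (Fin N → Bool)) :=
  (Measure.pi fun _ : C => bernoulliMeasureB pt).prod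
    (Measure.pi fun _ : Fin N => bernoulliMeasureB php)

/-- The treatment `Z_i` of unit `i`: cluster assignment XOR individual flip. -/
def treat {C : Type*} {N : ℕ} (c : Fin N → C) (i : Fin N)
    (ω : (C → Bool) × (Fin N → Bool)) : Bool :=
  xor (ω.1 (c i)) (ω.2 i)

/-- The marginal propensity `p_i(t) = Pr(Z_i = t)`. -/
noncomputable def margProp {C : Type*} [Fintype C] {N : ℕ} (pt php : ℝ) (c : Fin N → C)
    (i : Fin N) (t : Bool) : ℝ :=
  (designMeasure C N pt php {ω | treat c i ω = t}).toReal

/-- The joint propensity `p_{ij}(t₁,t₂) = Pr(Z_i = t₁ ∧ Z_j = t₂)`. -/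
noncomputable def jointProp {C : Type*} [Fintype C] {N : ℕ} (pt php : ℝ) (c : Fin N → C)
    (i j : Fin N) (t1 t2 : Bool) : ℝ :=
  (designMeasure C N pt php {ω | treat c i ω = t1 ∧ treat c j ω = t2}).toReal

/-- The Horvitz–Thompson estimator `μ̂(t)`. -/
noncomputable def htEst {C : Type*} [Fintype C] {N : ℕ} (pt php : ℝ) (c : Fin N → C)
    (Y : Fin N → Bool → ℝ) (t : Bool) (ω : (C → Bool) × (Fin N → Bool)) : ℝ :=
  (1 / (N : ℝ)) * ∑ i, if treat c i ω = t then Y i t / margProp pt php c i t else 0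

/-!
Writing `μ̂(t) = (1/N) ∑ᵢ (Yᵢ(t)/p(t)) · 1{Zᵢ = t}`, its variance is
`(1/N²) ∑ᵢ ∑ⱼ Yᵢ(t) Yⱼ(t) (p_{ij}(t,t) - p(t)²) / p(t)²`. The covariance
`p_{ij}(t,t) - p(t)²` of the two indicators is `p(t) - p(t)²` for `i = j`, `p(t,t) - p(t)²`
for distinct units of one cluster, and `0` across clusters, because then `Zᵢ` and `Zⱼ` are
functions of the disjoint pairs of independent coins `(B_{c(i)}, Fᵢ)` and `(B_{c(j)}, Fⱼ)`.
-/

open Finset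

section Covariance

variable {Ω : Type*} [MeasurableSpace Ω] {μ : Measure Ω} [IsProbabilityMeasure μ]

lemma covariance_indicator_const {A B : Set Ω} (hA : MeasurableSet A) (hB : MeasurableSet B)
    (a b : ℝ) :
    cov[A.indicator (fun _ => a), B.indicator (fun _ => b); μ]
      = a * b * (μ.real (A ∩ B) - μ.real A * μ.real B) := by
  rw [covariance_eq_sub (memLp_indicator_const 2 hA a (Or.inr (measure_ne_top μ A)))
    (memLp_indicator_const 2 hB b (Or.inr (measure_ne_top μ B)))]
  have hprod : A.indicator (fun _ => a) * B.indicator (fun _ => b)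
      = (A ∩ B).indicator (fun _ => a * b) :=
    funext fun ω => (Set.inter_indicator_mul _ _ ω).symm
  rw [hprod, integral_indicator_const _ (hA.inter hB), integral_indicator_const _ hA,
    integral_indicator_const _ hB]
  simp only [smul_eq_mul]
  ring

lemma variance_sum_indicator_const {ι : Type*} (s : Finset ι) {A : ι → Set Ω}
    (hA : ∀ i, MeasurableSet (A i)) (a : ι → ℝ) :
    variance (fun ω => ∑ i ∈ s, (A i).indicator (fun _ => a i) ω) μ
      = ∑ i ∈ s, ∑ j ∈ s, a i * a j * (μ.real (A i ∩ A j) - μ.real (A i) * μ.real (A j)) := by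
  have hX : ∀ i ∈ s, MemLp ((A i).indicator fun _ => a i) 2 μ :=
    fun i _ => memLp_indicator_const 2 (hA i) _ (Or.inr (measure_ne_top μ _))
  rw [← covariance_self (memLp_finsetSum s hX).aemeasurable, covariance_fun_sum_fun_sum' hX hX]
  simp_rw [covariance_indicator_const (hA _) (hA _)]

end Covariance

lemma sum_sum_filter_eq_sum_sum_ite {ι κ M : Type*} [Fintype ι] [Fintype κ] [DecidableEq κ]
    [AddCommMonoid M] (c : ι → κ) (f : ι → ι → M) :
    ∑ k, ∑ i ∈ univ.filter (fun i => c i = k), ∑ j ∈ univ.filter (fun j => c j = k), f i j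
      = ∑ i, ∑ j, if c i = c j then f i j else 0 := by
  calc _ = ∑ k, ∑ i ∈ univ.filter (fun i => c i = k),
          ∑ j ∈ univ.filter (fun j => c i = c j), f i j :=
        sum_congr rfl fun k _ => sum_congr rfl fun i hi => by
          rw [(mem_filter.1 hi).2]
          simp_rw [eq_comm]
    _ = _ := by simp_rw [sum_fiberwise, sum_filter]

section Design

variable {C : Type*} [Fintype C] {N : ℕ} {pt php : ℝ}

lemma isProbabilityMeasure_bernoulliMeasureB {p : ℝ} (h0 : 0 ≤ p) (h1 : p ≤ 1) :
    IsProbabilityMeasure (bernoulliMeasureB p) :=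
  ⟨by simp [bernoulliMeasureB, ← ENNReal.ofReal_add h0 (sub_nonneg.2 h1)]⟩

lemma bernoulliMeasureB_singleton_ne_zero {p : ℝ} (h0 : 0 < p) (h1 : p < 1) (u : Bool) :
    bernoulliMeasureB p {u} ≠ 0 := by
  cases u <;> simp [bernoulliMeasureB, h0, h1]

lemma isProbabilityMeasure_designMeasure (hpt0 : 0 ≤ pt) (hpt1 : pt ≤ 1) (hphp0 : 0 ≤ php)
    (hphp1 : php ≤ 1) : IsProbabilityMeasure (designMeasure C N pt php) := by
  have := isProbabilityMeasure_bernoulliMeasureB hpt0 hpt1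
  have := isProbabilityMeasure_bernoulliMeasureB hphp0 hphp1
  unfold designMeasure
  infer_instance

lemma designMeasure_singleton_ne_zero (hpt0 : 0 < pt) (hpt1 : pt < 1) (hphp0 : 0 < php)
    (hphp1 : php < 1) (ω : (C → Bool) × (Fin N → Bool)) :
    designMeasure C N pt php {ω} ≠ 0 := by
  have := isProbabilityMeasure_bernoulliMeasureB hpt0.le hpt1.le
  have := isProbabilityMeasure_bernoulliMeasureB hphp0.le hphp1.le
  rw [designMeasure, ← Set.singleton_prod_singleton, Measure.prod_prod,
    ← Set.univ_pi_singleton ω.1, ← Set.univ_pi_singleton ω.2, Measure.pi_pi, Measure.pi_pi]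
  simp [prod_ne_zero_iff, bernoulliMeasureB_singleton_ne_zero, hpt0, hpt1, hphp0, hphp1]

lemma margProp_pos (hpt0 : 0 < pt) (hpt1 : pt < 1) (hphp0 : 0 < php) (hphp1 : php < 1)
    (c : Fin N → C) (i : Fin N) (t : Bool) : 0 < margProp pt php c i t := by
  have := isProbabilityMeasure_designMeasure (C := C) (N := N) hpt0.le hpt1.le hphp0.le hphp1.le
  refine ENNReal.toReal_pos (fun h0 => ?_) (measure_ne_top _ _)
  refine designMeasure_singleton_ne_zero hpt0 hpt1 hphp0 hphp1
    ((fun _ => false, fun _ => t) : (C → Bool) × (Fin N → Bool)) ?_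
  exact measure_mono_null (by simp [treat]) h0

lemma jointProp_self (c : Fin N → C) (i : Fin N) (t : Bool) :
    jointProp pt php c i i t t = margProp pt php c i t := by
  simp [jointProp, margProp]

lemma indepFun_xor_pi {ι : Type*} [Fintype ι] {μ : ι → Measure Bool}
    [∀ k, IsProbabilityMeasure (μ k)] {a b a' b' : ι} (haa' : a ≠ a') (hab' : a ≠ b')
    (hba' : b ≠ a') (hbb' : b ≠ b') :
    IndepFun (fun x => xor (x a) (x b)) (fun x => xor (x a') (x b')) (Measure.pi μ) := by
  have hcoord : iIndepFun (fun k (x : ι → Bool) => x k) (Measure.pi μ) :=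
    iIndepFun_pi (X := fun _ => id) fun _ => aemeasurable_id
  exact (hcoord.indepFun_prodMk_prodMk (fun k => measurable_pi_apply k) a b a' b'
    haa' hab' hba' hbb').comp (φ := fun p => xor p.1 p.2) (ψ := fun p => xor p.1 p.2)
    (.of_discrete) (.of_discrete)

lemma jointProp_eq_mul_of_ne (hpt0 : 0 ≤ pt) (hpt1 : pt ≤ 1) (hphp0 : 0 ≤ php)
    (hphp1 : php ≤ 1) (c : Fin N → C) {i j : Fin N} (hc : c i ≠ c j) (t1 t2 : Bool) :
    jointProp pt php c i j t1 t2 = margProp pt php c i t1 * margProp pt php c j t2 := by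
  have := isProbabilityMeasure_bernoulliMeasureB hpt0 hpt1
  have := isProbabilityMeasure_bernoulliMeasureB hphp0 hphp1
  let μ : C ⊕ Fin N → Measure Bool := Sum.elim (fun _ => bernoulliMeasureB pt)
    (fun _ => bernoulliMeasureB php)
  have : ∀ k, IsProbabilityMeasure (μ k) := by rintro (k | k) <;> assumption
  have hμ : MeasurePreserving (MeasurableEquiv.sumPiEquivProdPi fun _ => Bool)
      (Measure.pi μ) (designMeasure C N pt php) :=
    measurePreserving_sumPiEquivProdPi μ
  have hind := (indepFun_xor_pi (μ := μ) (Sum.inl_injective.ne hc) Sum.inl_ne_inr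
    Sum.inr_ne_inl (Sum.inr_injective.ne fun h => hc (congrArg c h))).measure_inter_preimage_eq_mul
    {t1} {t2} (measurableSet_singleton _) (measurableSet_singleton _)
  have hpre (S : Set ((C → Bool) × (Fin N → Bool))) := hμ.measure_preimage
    (MeasurableSet.of_discrete (s := S)).nullMeasurableSet
  rw [jointProp, margProp, margProp, ← hpre, ← hpre, ← hpre, ← ENNReal.toReal_mul]
  exact congrArg ENNReal.toReal hind

lemma htEst_eq_const_mul_sum_indicator (c : Fin N → C) (Y : Fin N → Bool → ℝ) (t : Bool) :
    htEst pt php c Y t = fun ω => (1 / (N : ℝ)) *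
      ∑ i, {ω | treat c i ω = t}.indicator (fun _ => Y i t / margProp pt php c i t) ω := by
  funext ω
  simp only [htEst, Set.indicator_apply, Set.mem_ofPred_eq]

lemma variance_htEst (hpt0 : 0 ≤ pt) (hpt1 : pt ≤ 1) (hphp0 : 0 ≤ php) (hphp1 : php ≤ 1)
    (c : Fin N → C) (Y : Fin N → Bool → ℝ) (t : Bool) :
    variance (htEst pt php c Y t) (designMeasure C N pt php)
      = 1 / (N : ℝ) ^ 2 * ∑ i, ∑ j, Y i t / margProp pt php c i t * (Y j t / margProp pt php c j t)
          * (jointProp pt php c i j t t - margProp pt php c i t * margProp pt php c j t) := by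
  have := isProbabilityMeasure_designMeasure (C := C) (N := N) hpt0 hpt1 hphp0 hphp1
  rw [htEst_eq_const_mul_sum_indicator, variance_const_mul,
    variance_sum_indicator_const _ fun _ => .of_discrete, one_div_pow]
  rfl

end Design

lemma sum_sum_cov_eq_of_cluster {ι κ : Type*} [Fintype ι] [DecidableEq ι] [DecidableEq κ]
    (c : ι → κ) (y : ι → ℝ) (π : ι → ι → ℝ) {p q : ℝ} (hp : p ≠ 0) (hdiag : ∀ i, π i i = p)
    (hsame : ∀ i j, i ≠ j → c i = c j → π i j = q) (hdiff : ∀ i j, c i ≠ c j → π i j = p * p) :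
    ∑ i, ∑ j, y i / p * (y j / p) * (π i j - p * p)
      = (q / p ^ 2 - 1) * (∑ i, ∑ j, if c i = c j then y i * y j else 0)
        + (p - q) / p ^ 2 * ∑ i, y i * y i := by
  have hterm : ∀ i j, y i / p * (y j / p) * (π i j - p * p)
      = (q / p ^ 2 - 1) * (if c i = c j then y i * y j else 0)
        + if i = j then (p - q) / p ^ 2 * (y i * y j) else 0 := by
    intro i j
    by_cases hij : i = j
    · subst hij
      simp only [hdiag, if_true]
      field_simp
      ring
    by_cases hc : c i = c j
    · simp only [hsame i j hij hc, hc, hij, if_true, if_false]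
      field_simp
      ring
    · simp [hdiff i j hc, hc, hij]
  simp_rw [hterm, sum_add_distrib, ← mul_sum, sum_ite_eq, if_pos (mem_univ _), ← mul_sum]

/-- Under the hole-punching graph-cluster randomization design with `0 < p_t < 1` and
`0 < p_hp < 1`, for each `t ∈ {0,1}` the variance of the Horvitz–Thompson estimator
satisfies
`Var[μ̂(t)] = (1/N²)·[(p(t,t)/p(t)² − 1)·Σ_c S_c(t,t) + ((p(t) − p(t,t))/p(t)²)·Q(t,t)]`,
where `p(t)` is the common marginal propensity, `p(t1,t2)` is the common joint propensity
of distinct units in the same cluster, `S_c(t1,t2) = Σ_{i∈c} Σ_{j∈c} Y_i(t1)·Y_j(t2)` and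
`Q(t1,t2) = Σ_i Y_i(t1)·Y_i(t2)`. -/
theorem ht_variance_design
    {C : Type*} [Fintype C] [DecidableEq C] {N : ℕ} (hN : 1 ≤ N)
    (pt php : ℝ) (hpt0 : 0 < pt) (hpt1 : pt < 1) (hphp0 : 0 < php) (hphp1 : php < 1)
    (c : Fin N → C) (Y : Fin N → Bool → ℝ)
    (p : Bool → ℝ) (hp : ∀ (i : Fin N) (t : Bool), margProp pt php c i t = p t)
    (pj : Bool → Bool → ℝ)
    (hpj : ∀ (i j : Fin N) (t1 t2 : Bool), i ≠ j → c i = c j →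
      jointProp pt php c i j t1 t2 = pj t1 t2)
    (t : Bool) :
    variance (htEst pt php c Y t) (designMeasure C N pt php)
      = (1 / (N : ℝ) ^ 2) *
          ((pj t t / (p t) ^ 2 - 1) *
              (∑ k : C, ∑ i ∈ Finset.univ.filter (fun i => c i = k),
                ∑ j ∈ Finset.univ.filter (fun j => c j = k), Y i t * Y j t)
            + ((p t - pj t t) / (p t) ^ 2) * ∑ i, Y i t * Y i t) := by
  have hpos : 0 < p t := hp ⟨0, hN⟩ t ▸ margProp_pos hpt0 hpt1 hphp0 hphp1 c _ t
  rw [variance_htEst hpt0.le hpt1.le hphp0.le hphp1.le, sum_sum_filter_eq_sum_sum_ite]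
  simp only [hp]
  rw [sum_sum_cov_eq_of_cluster c (Y · t) (jointProp pt php c · · t t) hpos.ne'
    (fun i => by rw [jointProp_self, hp])
    (fun i j hij hc => hpj i j t t hij hc)
    (fun i j hc => by rw [jointProp_eq_mul_of_ne hpt0.le hpt1.le hphp0.le hphp1.le c hc, hp, hp])]
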